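/- Any sequence {z_n}_{n≥2} in the open unit disk 𝔻 with |z_n| = 1 - 1/n! for all n ≥ 2 is a thin Blaschke sequence, i.e. lim_{k→∞} ∏_{j : j ≠ k} d(z_k, z_j) = 1. -/

import Mathlib

open Complex Filter Metric

/-- The pseudohyperbolic distance `d(z,w) = |z - w| / |1 - conj z * w|` on the unit disk. -/
noncomputable def pd (z w : ℂ) : ℝ :=
  ‖z - w‖ / ‖1 - (starRingEnd ℂ) z * w‖

/-!
The identity `|1 - z̄w|² - |z - w|² = (1 - |z|²)(1 - |w|²)` gives
`1 - d(z, w) ≤ 1 - d(z, w)² ≤ 4 (1 - |w|) / (1 - |z|)`. For the radii `1 - 1/(n+2)!` the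
superexponential growth of the factorials turns this into
`1 - d(z_k, z_j) ≤ 4 / (k + 2) · 2 ^ (1 - |j - k|)` for `j ≠ k`; summing over `j` and using
`∏ f_j ≥ 1 - ∑ (1 - f_j)` for `f_j ∈ [0, 1]` gives `∏_{j ≠ k} d(z_k, z_j) ≥ 1 - 16 / (k + 2)`.
-/

open Finset
open scoped Nat

theorem sq_norm_one_sub_conj_mul_sub_sq_norm_sub (z w : ℂ) :
    ‖1 - starRingEnd ℂ z * w‖ ^ 2 - ‖z - w‖ ^ 2 = (1 - ‖z‖ ^ 2) * (1 - ‖w‖ ^ 2) := by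
  simp only [Complex.sq_norm, normSq_apply, sub_re, sub_im, one_re, one_im, mul_re, mul_im, conj_re,
    conj_im]
  ring

theorem pd_nonneg (z w : ℂ) : 0 ≤ pd z w := by unfold pd; positivity

theorem pd_comm (z w : ℂ) : pd z w = pd w z := by
  rw [pd, pd, norm_sub_rev, ← norm_conj (1 - _)]
  simp [mul_comm]

theorem pd_le_one {z w : ℂ} (hz : ‖z‖ ≤ 1) (hw : ‖w‖ ≤ 1) : pd z w ≤ 1 := by
  refine div_le_one_of_le₀ ((pow_le_pow_iff_left₀ (norm_nonneg _) (norm_nonneg _) two_ne_zero).1 ?_)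
    (norm_nonneg _)
  have hid := sq_norm_one_sub_conj_mul_sub_sq_norm_sub z w
  have h1 : 0 ≤ 1 - ‖z‖ ^ 2 := by nlinarith [norm_nonneg z]
  have h2 : 0 ≤ 1 - ‖w‖ ^ 2 := by nlinarith [norm_nonneg w]
  nlinarith [mul_nonneg h1 h2]

theorem one_sub_norm_le_norm_one_sub_conj_mul {z w : ℂ} (hw : ‖w‖ ≤ 1) :
    1 - ‖z‖ ≤ ‖1 - starRingEnd ℂ z * w‖ := by
  calc 1 - ‖z‖ ≤ 1 - ‖z‖ * ‖w‖ := by nlinarith [norm_nonneg z]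
    _ = ‖(1 : ℂ)‖ - ‖starRingEnd ℂ z * w‖ := by simp
    _ ≤ _ := norm_sub_norm_le _ _

theorem one_sub_pd_le {z w : ℂ} (hz : ‖z‖ < 1) (hw : ‖w‖ ≤ 1) :
    1 - pd z w ≤ 4 * (1 - ‖w‖) / (1 - ‖z‖) := by
  set D := ‖1 - starRingEnd ℂ z * w‖
  have ha : 0 < 1 - ‖z‖ := sub_pos.2 hz
  have hD : 1 - ‖z‖ ≤ D := one_sub_norm_le_norm_one_sub_conj_mul hw
  have hD0 : 0 < D := ha.trans_le hD
  have hpd0 := pd_nonneg z w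
  have hpd1 := pd_le_one hz.le hw
  have key : 1 - pd z w ^ 2 = (1 - ‖z‖ ^ 2) * (1 - ‖w‖ ^ 2) / D ^ 2 := by
    rw [← sq_norm_one_sub_conj_mul_sub_sq_norm_sub, pd, div_pow, sub_div, div_self (by positivity)]
  calc 1 - pd z w ≤ 1 - pd z w ^ 2 := by nlinarith
    _ = (1 - ‖z‖ ^ 2) * (1 - ‖w‖ ^ 2) / D ^ 2 := key
    _ ≤ (2 * (1 - ‖z‖)) * (2 * (1 - ‖w‖)) / (1 - ‖z‖) ^ 2 := by
        gcongr
        · nlinarith [norm_nonneg w]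
        · nlinarith [norm_nonneg z]
        · nlinarith [norm_nonneg w]
    _ = 4 * (1 - ‖w‖) / (1 - ‖z‖) := by field_simp; ring

theorem Nat.mul_two_pow_mul_factorial_le {m n : ℕ} (hm : 1 ≤ m) (hmn : m < n) :
    n * 2 ^ (n - m - 1) * m ! ≤ n ! := by
  obtain ⟨d, rfl⟩ : ∃ d, n = m + d + 1 := ⟨n - m - 1, by omega⟩
  have hd : m + d + 1 - m - 1 = d := by omega
  calc (m + d + 1) * 2 ^ (m + d + 1 - m - 1) * m !
      ≤ (m + d + 1) * (m ! * (m + 1) ^ d) := by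
        rw [hd, mul_assoc, mul_comm (2 ^ d)]
        gcongr
        omega
    _ ≤ (m + d + 1) * (m + d)! := by gcongr; exact Nat.factorial_mul_pow_le_factorial
    _ = (m + d + 1)! := (Nat.factorial_succ _).symm

theorem sum_half_pow_le_two_of_injOn {ι : Type*} {s : Finset ι} {e : ι → ℕ}
    (he : Set.InjOn e s) : ∑ i ∈ s, (1 / 2 : ℝ) ^ e i ≤ 2 := by
  rw [← Finset.sum_image he]
  exact (summable_geometric_two.sum_le_tsum _ fun _ _ => by positivity).trans_eq
    tsum_geometric_two

theorem sum_half_pow_dist_sub_one_le {s : Finset ℕ} {k : ℕ} (hk : k ∉ s) :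
    ∑ j ∈ s, (1 / 2 : ℝ) ^ (Nat.dist j k - 1) ≤ 4 := by
  rw [← Finset.sum_filter_add_sum_filter_not s (· < k)]
  have hbelow : Set.InjOn (fun j => Nat.dist j k - 1) (s.filter (· < k)) := by
    intro i hi j hj hij
    simp only [coe_filter, Set.mem_ofPred_eq] at hi hj
    simp only [Nat.dist] at hij
    omega
  have habove : Set.InjOn (fun j => Nat.dist j k - 1) (s.filter (¬ · < k)) := by
    intro i hi j hj hij
    simp only [coe_filter, Set.mem_ofPred_eq] at hi hj
    have hik : i ≠ k := fun h => hk (h ▸ hi.1)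
    have hjk : j ≠ k := fun h => hk (h ▸ hj.1)
    simp only [Nat.dist] at hij
    omega
  linarith [sum_half_pow_le_two_of_injOn hbelow, sum_half_pow_le_two_of_injOn habove]

theorem Finset.one_sub_sum_le_prod {ι : Type*} (s : Finset ι) {f : ι → ℝ}
    (h0 : ∀ i ∈ s, 0 ≤ f i) (h1 : ∀ i ∈ s, f i ≤ 1) :
    1 - ∑ i ∈ s, (1 - f i) ≤ ∏ i ∈ s, f i := by
  classical
  induction s using Finset.induction_on with
  | empty => simp
  | insert a s ha ih =>
    rw [forall_mem_insert] at h0 h1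
    rw [prod_insert ha, sum_insert ha]
    have hP : ∏ i ∈ s, f i ≤ 1 := prod_le_one h0.2 h1.2
    nlinarith [ih h0.2 h1.2, mul_nonneg (sub_nonneg.2 hP) (sub_nonneg.2 h1.1)]

theorem le_tprod_of_le_prod {ι α : Type*} [CommMonoid α] [Preorder α] [TopologicalSpace α]
    [ClosedIciTopology α] {f : ι → α} {c : α} (hc : c ≤ 1) (h : ∀ s, c ≤ ∏ i ∈ s, f i) :
    c ≤ ∏' i, f i := by
  by_cases hf : Multipliable f
  · exact le_hasProd_of_le_prod hf.hasProd h
  · rwa [tprod_eq_one_of_not_multipliable hf]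

section FactorialRadii

variable {z : ℕ → ℂ}

theorem norm_lt_one_of_factorial_radii
    (hz : ∀ n, ‖z n‖ = 1 - 1 / (Nat.factorial (n + 2) : ℝ)) (n : ℕ) : ‖z n‖ < 1 := by
  rw [hz]
  have : (0 : ℝ) < ((n + 2)! : ℝ) := by positivity
  linarith [one_div_pos.2 this]

theorem one_sub_pd_le_of_lt (hz : ∀ n, ‖z n‖ = 1 - 1 / (Nat.factorial (n + 2) : ℝ))
    {m n : ℕ} (hmn : m < n) :
    1 - pd (z m) (z n) ≤ 4 / (n + 2) * (1 / 2) ^ (n - m - 1) := by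
  have hfact : ((n + 2) * 2 ^ (n - m - 1) * ((m + 2)! : ℝ)) ≤ ((n + 2)! : ℝ) := by
    have h := Nat.mul_two_pow_mul_factorial_le (m := m + 2) (n := n + 2) (by omega) (by omega)
    rw [show n + 2 - (m + 2) - 1 = n - m - 1 by omega] at h
    exact_mod_cast h
  have hm : (0 : ℝ) < ((m + 2)! : ℝ) := by positivity
  have hn : (0 : ℝ) < ((n + 2)! : ℝ) := by positivity
  calc 1 - pd (z m) (z n) ≤ 4 * (1 - ‖z n‖) / (1 - ‖z m‖) :=
        one_sub_pd_le (norm_lt_one_of_factorial_radii hz m) (norm_lt_one_of_factorial_radii hz n).le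
    _ = 4 * ((m + 2)! : ℝ) / ((n + 2)! : ℝ) := by
        rw [hz, hz, sub_sub_cancel, sub_sub_cancel]
        field_simp
    _ ≤ 4 * ((m + 2)! : ℝ) / ((n + 2) * 2 ^ (n - m - 1) * ((m + 2)! : ℝ)) := by gcongr
    _ = 4 / (n + 2) * (1 / 2) ^ (n - m - 1) := by rw [one_div_pow]; field_simp

theorem one_sub_pd_le_half_pow_dist (hz : ∀ n, ‖z n‖ = 1 - 1 / (Nat.factorial (n + 2) : ℝ))
    {j k : ℕ} (hjk : j ≠ k) :
    1 - pd (z k) (z j) ≤ 4 / (k + 2) * (1 / 2) ^ (Nat.dist j k - 1) := by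
  rcases hjk.lt_or_gt with hlt | hgt
  · rw [pd_comm, Nat.dist_eq_sub_of_le hlt.le]
    exact one_sub_pd_le_of_lt hz hlt
  · rw [Nat.dist_eq_sub_of_le_right hgt.le]
    refine (one_sub_pd_le_of_lt hz hgt).trans ?_
    gcongr

theorem one_sub_le_tprod_pd (hz : ∀ n, ‖z n‖ = 1 - 1 / (Nat.factorial (n + 2) : ℝ))
    (k : ℕ) :
    1 - 16 / (k + 2) ≤ ∏' j : {j : ℕ // j ≠ k}, pd (z k) (z j) := by
  refine le_tprod_of_le_prod (by linarith [show (0 : ℝ) ≤ 16 / (k + 2) by positivity]) fun s => ?_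
  have hk : k ∉ s.map (Function.Embedding.subtype _) := by simp
  have hsum : ∑ j ∈ s, (1 - pd (z k) (z j)) ≤ 16 / (k + 2) :=
    calc ∑ j ∈ s, (1 - pd (z k) (z j))
        ≤ ∑ j ∈ s.map (Function.Embedding.subtype _),
            4 / (k + 2) * (1 / 2 : ℝ) ^ (Nat.dist j k - 1) := by
          rw [sum_map]
          exact sum_le_sum fun j _ => one_sub_pd_le_half_pow_dist hz j.2
      _ ≤ 4 / (k + 2) * 4 := by
          rw [← mul_sum]
          gcongr
          exact sum_half_pow_dist_sub_one_le hk
      _ = 16 / (k + 2) := by ring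
  have hle1 : ∀ n, ‖z n‖ ≤ 1 := fun n => (norm_lt_one_of_factorial_radii hz n).le
  linarith [one_sub_sum_le_prod s (fun j _ => pd_nonneg (z k) (z j))
    (fun j _ => pd_le_one (hle1 k) (hle1 j))]

end FactorialRadii

/-- Here `z n` is the paper's `z_{n+2}`. -/
theorem stmt2 (z : ℕ → ℂ)
    (hz : ∀ n, ‖z n‖ = 1 - 1 / (Nat.factorial (n + 2) : ℝ)) :
    Tendsto (fun k => ∏' j : {j : ℕ // j ≠ k}, pd (z k) (z (j : ℕ))) atTop (nhds 1) := by
  have hle1 : ∀ n, ‖z n‖ ≤ 1 := fun n => (norm_lt_one_of_factorial_radii hz n).le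
  have hlower : Tendsto (fun k : ℕ => 1 - 16 / ((k : ℝ) + 2)) atTop (nhds 1) := by
    have h : Tendsto (fun k : ℕ => 16 / ((k : ℝ) + 2)) atTop (nhds 0) :=
      tendsto_const_nhds.div_atTop (tendsto_atTop_add_const_right _ 2 tendsto_natCast_atTop_atTop)
    simpa using (tendsto_const_nhds (x := (1 : ℝ))).sub h
  refine tendsto_of_tendsto_of_tendsto_of_le_of_le hlower tendsto_const_nhds
    (one_sub_le_tprod_pd hz) fun k => ?_
  exact tprod_le_of_prod_le' le_rfl fun s =>
    prod_le_one (fun j _ => pd_nonneg _ _) fun j _ => pd_le_one (hle1 k) (hle1 j)
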